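/- Let N ≥ 1 be an integer, let a < b be real numbers, and let f_1, …, f_N and g_1, …, g_N be continuous real-valued functions on [a,b]. Define the kernel K(x,y) = Σ_{j=1}^N f_j(x) g_j(y) and the N×N matrix A with entries A_{ij} = ∫_a^b f_i(x) g_j(x) dx. Then det(I_N − A) = Σ_{n=0}^{N} ((−1)^n / n!) · ∫_{[a,b]^n} det((K(x_i, x_j))_{1≤i,j≤n}) dx_1 ⋯ dx_n, where the n = 0 term of the sum is 1. -/

import Mathlib

/-!
Both sides equal `∑ₖ (-1)ᵏ ∑_{|S| = k} det A_S`, the signed sum of the principal minors of `A`.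
For `det (1 - A)` this is the expansion of the determinant by multilinearity in the rows. On the
other side, `(K (xᵢ, xⱼ))` is the product of the `n × N` matrix `(f_l (xᵢ))` and the `N × n` matrix
`(g_l (xⱼ))`; expanding its determinant by multilinearity in the rows and then by the Leibniz
formula writes it as a sum of products of functions of single coordinates, so Fubini turns its
integral into `∑_{c : Fin n → Fin N} det A_{c,c}`. Maps `c` that are not injective give repeated
rows, and each `n`-element set `S` is the image of exactly `n!` injective ones, which cancels `n!`.
-/

open MeasureTheory Finset

namespace Matrix

variable {R : Type*} [CommRing R] {ι κ : Type*} [Fintype ι] [Fintype κ] [DecidableEq κ]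

theorem det_one_add_eq_sum_det_submatrix (M : Matrix κ κ R) :
    det (1 + M) = ∑ s : Finset κ, det (M.submatrix ((↑) : s → κ) (↑)) := by
  rw [add_comm]
  exact (detRowAlternating.map_add_univ M.row (1 : Matrix κ κ R).row).trans
    (sum_congr rfl fun s _ => det_piecewise_one_eq_submatrix_det M s)

theorem det_one_sub_eq_sum_range_sum_det_submatrix (M : Matrix κ κ R) :
    det (1 - M) = ∑ k ∈ range (Fintype.card κ + 1),
      (-1) ^ k * ∑ s ∈ powersetCard k (univ : Finset κ),
        det (M.submatrix ((↑) : s → κ) (↑)) := by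
  rw [sub_eq_add_neg, det_one_add_eq_sum_det_submatrix, ← powerset_univ, sum_powerset,
    card_univ]
  refine sum_congr rfl fun k _ => ?_
  rw [mul_sum]
  refine sum_congr rfl fun s hs => ?_
  simp only [submatrix_neg, Pi.neg_apply, det_neg, Fintype.card_coe,
    (mem_powersetCard.1 hs).2]

theorem det_mul_eq_sum_prod_mul_det_submatrix (F : Matrix κ ι R) (G : Matrix ι κ R) :
    det (F * G) = ∑ c : κ → ι, (∏ p, F p (c p)) * det (G.submatrix c id) := by
  have hrows : (F * G).row = fun p => ∑ l, F p l • G.row l := by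
    ext p q
    simp [row, mul_apply]
  calc det (F * G) = detRowAlternating fun p => ∑ l, F p l • G.row l := congrArg _ hrows
    _ = ∑ c : κ → ι, detRowAlternating fun p => F p (c p) • G.row (c p) :=
      detRowAlternating.toMultilinearMap.map_sum fun p l => F p l • G.row l
    _ = _ := sum_congr rfl fun c _ => by rw [detRowAlternating.map_smul_univ, smul_eq_mul]; rfl

theorem det_mul_eq_sum_sum_sign_mul_prod (F : Matrix κ ι R) (G : Matrix ι κ R) :
    det (F * G) = ∑ c : κ → ι, ∑ σ : Equiv.Perm κ,
      ((Equiv.Perm.sign σ : ℤ) : R) * ∏ p, F p (c p) * G (c (σ p)) p := by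
  rw [det_mul_eq_sum_prod_mul_det_submatrix]
  refine sum_congr rfl fun c _ => ?_
  rw [det_apply', mul_sum]
  refine sum_congr rfl fun σ _ => ?_
  rw [prod_mul_distrib, mul_left_comm]
  rfl

variable [DecidableEq ι]

theorem sum_det_submatrix_injective_image_eq (B : Matrix ι ι R) {s : Finset ι}
    (hs : s.card = Fintype.card κ) :
    ∑ c ∈ univ.filter (fun c : κ → ι => c.Injective ∧ univ.image c = s),
        det (B.submatrix c c) =
      (Fintype.card κ).factorial • det (B.submatrix ((↑) : s → ι) (↑)) := by
  rw [← Fintype.card_equiv (Fintype.equivOfCardEq (by rw [Fintype.card_coe, hs])),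
    ← card_univ, ← sum_const]
  symm
  refine sum_bij (fun e _ => (↑) ∘ e) (fun e _ => ?_) (fun e₁ _ e₂ _ h => ?_) (fun c hc => ?_)
    (fun e _ => (det_submatrix_equiv_self e _).symm)
  · refine mem_filter.2 ⟨mem_univ _, Subtype.val_injective.comp e.injective, ?_⟩
    ext y
    refine ⟨fun hy => ?_, fun hy => mem_image.2 ⟨e.symm ⟨y, hy⟩, mem_univ _, by simp⟩⟩
    obtain ⟨p, -, rfl⟩ := mem_image.1 hy
    exact (e p).2
  · exact Equiv.ext fun p => Subtype.val_injective (congrFun h p)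
  · obtain ⟨-, hinj, himage⟩ := mem_filter.1 hc
    have hmem : ∀ p, c p ∈ s := fun p => himage ▸ mem_image_of_mem c (mem_univ p)
    refine ⟨Equiv.ofBijective (fun p => ⟨c p, hmem p⟩) ⟨fun p q h => hinj congr(($h).1),
      fun y => ?_⟩, mem_univ _, rfl⟩
    obtain ⟨p, -, hp⟩ := mem_image.1 (himage ▸ y.2 : (y : ι) ∈ univ.image c)
    exact ⟨p, Subtype.ext hp⟩

theorem sum_det_submatrix_eq_factorial_smul_sum_powersetCard (B : Matrix ι ι R) :
    ∑ c : κ → ι, det (B.submatrix c c) = (Fintype.card κ).factorial •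
      ∑ s ∈ powersetCard (Fintype.card κ) (univ : Finset ι),
        det (B.submatrix ((↑) : s → ι) (↑)) := by
  have hinjective : ∀ c ∈ (univ : Finset (κ → ι)),
      det (B.submatrix c c) ≠ 0 → c.Injective := by
    intro c _ hdet
    by_contra hc
    obtain ⟨p, q, hpq, hne⟩ := Function.not_injective_iff.1 hc
    exact hdet (det_zero_of_row_eq hne (by ext r; simp [hpq]))
  have himage : ∀ c ∈ (univ : Finset (κ → ι)).filter Function.Injective,
      univ.image c ∈ powersetCard (Fintype.card κ) univ := fun c hc =>
    mem_powersetCard.2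
      ⟨subset_univ _, by rw [card_image_of_injective _ (mem_filter.1 hc).2, card_univ]⟩
  rw [← sum_filter_of_ne hinjective, ← sum_fiberwise_of_maps_to himage, smul_sum]
  refine sum_congr rfl fun s hs => ?_
  rw [filter_filter]
  exact sum_det_submatrix_injective_image_eq B (mem_powersetCard.1 hs).2

end Matrix

section

open Matrix

variable {α ι κ 𝕜 : Type*} [MeasurableSpace α] {μ : Measure α} [SigmaFinite μ] [Fintype ι]
  [Fintype κ] [DecidableEq κ] [RCLike 𝕜]

theorem integral_det_kernel (f g : ι → α → 𝕜)
    (hfg : ∀ i j, Integrable (fun t => f i t * g j t) μ) :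
    ∫ x : κ → α, det (of fun p q => ∑ l, f l (x p) * g l (x q)) ∂(Measure.pi fun _ => μ) =
      ∑ c : κ → ι, det ((of fun i j => ∫ t, f i t * g j t ∂μ).submatrix c c) := by
  have hkernel : ∀ x : κ → α, (of fun p q => ∑ l, f l (x p) * g l (x q)) =
      (of fun p l => f l (x p)) * of fun l q => g l (x q) := fun x => by
    ext p q
    simp [mul_apply]
  have hint : ∀ (c : κ → ι) (σ : Equiv.Perm κ), Integrable
      (fun x : κ → α => ∏ p, f (c p) (x p) * g (c (σ p)) (x p)) (Measure.pi fun _ => μ) :=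
    fun c σ => Integrable.fintype_prod fun p => hfg _ _
  simp only [hkernel, det_mul_eq_sum_sum_sign_mul_prod, of_apply]
  rw [integral_finsetSum _ fun c _ => integrable_finsetSum _ fun σ _ => (hint c σ).const_mul _]
  refine sum_congr rfl fun c _ => ?_
  rw [integral_finsetSum _ fun σ _ => (hint c σ).const_mul _, ← det_transpose, det_apply']
  refine sum_congr rfl fun σ _ => ?_
  rw [integral_const_mul, integral_fintype_prod_eq_prod (fun p t => f (c p) t * g (c (σ p)) t)]
  rfl

end

theorem stmt_1 (N : ℕ) (a b : ℝ)
    (f g : Fin N → ℝ → ℝ)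
    (hf : ∀ i, ContinuousOn (f i) (Set.Icc a b))
    (hg : ∀ i, ContinuousOn (g i) (Set.Icc a b)) :
    Matrix.det (1 - Matrix.of fun i j : Fin N => ∫ t in Set.Icc a b, f i t * g j t)
      = ∑ n ∈ Finset.range (N + 1), ((-1 : ℝ) ^ n / n.factorial) *
          ∫ x in (Set.univ.pi fun _ : Fin n => Set.Icc a b),
            Matrix.det (Matrix.of fun i j : Fin n => ∑ l, f l (x i) * g l (x j)) := by
  have hfg : ∀ i j, Integrable (fun t => f i t * g j t) (volume.restrict (Set.Icc a b)) :=
    fun i j => ((hf i).mul (hg j)).integrableOn_compact isCompact_Icc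
  rw [Matrix.det_one_sub_eq_sum_range_sum_det_submatrix, Fintype.card_fin]
  refine sum_congr rfl fun n _ => ?_
  rw [volume_pi, Measure.restrict_pi_pi, integral_det_kernel f g hfg,
    Matrix.sum_det_submatrix_eq_factorial_smul_sum_powersetCard, Fintype.card_fin, nsmul_eq_mul]
  field_simp
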